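/- Let λ_1, …, λ_{10} be complex numbers of modulus 1 and let χ, C, D ∈ ℂ. Assume the eta-product identity 2χ + η_g(τ/2)/η_g(τ) − η_{-g}(τ/2)/η_{-g}(τ) + C·η_{-g}(τ) = 0 holds for all τ ∈ ℍ. Define F(τ) = (1/2)·Λ_2(τ/2)·(η_g(τ/2)/η_g(τ)) − (1/2)·Λ_2(τ/2+1/2)·(η_{-g}(τ/2)/η_{-g}(τ)) + (1/2)·D·η_g(τ) − Λ_2(τ)·C·η_{-g}(τ) and t_g(τ) = η_g(τ)/η_g(2τ). Then for all τ ∈ ℍ one has F(τ) − (1/2)·D·η_g(τ) − 2χ·Λ_2(τ) = (1/4)·[ t_g(τ/2)·Λ_4(τ/2) + t_g((τ+1)/2)·Λ_4((τ+1)/2) ]. -/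

import Mathlib

noncomputable section

open Complex

/-- `2πi`. -/
def twoPiI : ℂ := 2 * Real.pi * Complex.I

/-- `q = e^{2πiτ}`. -/
def qq (τ : ℂ) : ℂ := Complex.exp (twoPiI * τ)

/-- `y = e^{2πiz}`. -/
def yy (z : ℂ) : ℂ := Complex.exp (twoPiI * z)

/-- Jacobi theta function `ϑ₁`. -/
def th1 (τ z : ℂ) : ℂ :=
  -Complex.I * ∑' n : ℤ, (-1 : ℂ) ^ n *
    Complex.exp (twoPiI * (((n : ℂ) + 1/2) * z + ((n : ℂ) + 1/2) ^ 2 / 2 * τ))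

/-- Jacobi theta function `ϑ₂`. -/
def th2 (τ z : ℂ) : ℂ :=
  ∑' n : ℤ, Complex.exp (twoPiI * (((n : ℂ) + 1/2) * z + ((n : ℂ) + 1/2) ^ 2 / 2 * τ))

/-- Jacobi theta function `ϑ₃`. -/
def th3 (τ z : ℂ) : ℂ :=
  ∑' n : ℤ, Complex.exp (twoPiI * ((n : ℂ) * z + (n : ℂ) ^ 2 / 2 * τ))

/-- Jacobi theta function `ϑ₄`. -/
def th4 (τ z : ℂ) : ℂ :=
  ∑' n : ℤ, (-1 : ℂ) ^ n * Complex.exp (twoPiI * ((n : ℂ) * z + (n : ℂ) ^ 2 / 2 * τ))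

/-- The Dedekind eta function `η(τ) = q^{1/24} ∏_{n≥1} (1 - qⁿ)`. -/
def etaF (τ : ℂ) : ℂ :=
  Complex.exp (twoPiI * τ / 24) * ∏' n : ℕ, (1 - qq τ ^ (n + 1))

/-- The quasimodular Eisenstein series `E₂(τ) = 1 - 24 ∑_{n≥1} σ₁(n) qⁿ`. -/
def E2 (τ : ℂ) : ℂ :=
  1 - 24 * ∑' n : ℕ, (∑ d ∈ Nat.divisors (n + 1), (d : ℂ)) * qq τ ^ (n + 1)

/-- `Λ_N(τ) = (N/24)(N E₂(Nτ) - E₂(τ))`. -/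
def Lam (N : ℕ) (τ : ℂ) : ℂ := (N : ℂ) / 24 * ((N : ℂ) * E2 ((N : ℂ) * τ) - E2 τ)

/-- The weak Jacobi form `φ_{0,1}`. -/
def phi01 (τ z : ℂ) : ℂ :=
  4 * (th2 τ z ^ 2 / th2 τ 0 ^ 2 + th3 τ z ^ 2 / th3 τ 0 ^ 2 + th4 τ z ^ 2 / th4 τ 0 ^ 2)

/-- The weak Jacobi form `φ_{-2,1}`. -/
def phim21 (τ z : ℂ) : ℂ := -(th1 τ z ^ 2) / etaF τ ^ 6

/-- `η_g(τ) = q·∏_{n≥1}[(1−qⁿ)⁴·∏_{i=1}^{10}(1−λᵢ⁻¹qⁿ)(1−λᵢqⁿ)]`. -/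
def etaG (lam : Fin 10 → ℂ) (τ : ℂ) : ℂ :=
  qq τ * ∏' n : ℕ, ((1 - qq τ ^ (n + 1)) ^ 4 *
    ∏ i, ((1 - (lam i)⁻¹ * qq τ ^ (n + 1)) * (1 - lam i * qq τ ^ (n + 1))))

/-- `η_{-g}(τ) = q·∏_{n≥1}[(1+qⁿ)⁴·∏_{i=1}^{10}(1+λᵢ⁻¹qⁿ)(1+λᵢqⁿ)]`. -/
def etaGneg (lam : Fin 10 → ℂ) (τ : ℂ) : ℂ :=
  qq τ * ∏' n : ℕ, ((1 + qq τ ^ (n + 1)) ^ 4 *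
    ∏ i, ((1 + (lam i)⁻¹ * qq τ ^ (n + 1)) * (1 + lam i * qq τ ^ (n + 1))))

/-- The twining genus `Φ = φ_g` built from `η_g`, `η_{-g}`, the theta quotients, and the
constants `C = C_{-g}` and `D = D_g`. -/
def Phi (lam : Fin 10 → ℂ) (C D : ℂ) (τ z : ℂ) : ℂ :=
  -(1 / 2) * ((th4 τ z ^ 2 / th4 τ 0 ^ 2) * (etaG lam (τ / 2) / etaG lam τ)
            - (th3 τ z ^ 2 / th3 τ 0 ^ 2) * (etaGneg lam (τ / 2) / etaGneg lam τ))
  + 1 / 2 * ((th1 τ z ^ 2 / etaF τ ^ 6) * D * etaG lam τ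
           - (th2 τ z ^ 2 / th2 τ 0 ^ 2) * C * etaGneg lam τ)

/-- `F = F_g`, as in equation (9.14). -/
def Fg (lam : Fin 10 → ℂ) (C D : ℂ) (τ : ℂ) : ℂ :=
  1 / 2 * Lam 2 (τ / 2) * (etaG lam (τ / 2) / etaG lam τ)
  - 1 / 2 * Lam 2 (τ / 2 + 1 / 2) * (etaGneg lam (τ / 2) / etaGneg lam τ)
  + 1 / 2 * D * etaG lam τ
  - Lam 2 τ * C * etaGneg lam τ

/-- `t_g(τ) = η_g(τ)/η_g(2τ)`. -/
def tg (lam : Fin 10 → ℂ) (τ : ℂ) : ℂ := etaG lam τ / etaG lam (2 * τ)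

/-! Write `p = qq (τ / 2)`, so `qq τ = p²` and `qq ((τ + 1) / 2) = -p`. Split the product for
`η_g` at `-p` into odd and even exponents: its odd part `∏ etaGFactor (-p^(2k+1))` is the odd
part of the product for `η_{-g}` at `p`, and its even part is the product for `η_g` at `p²`.
Hence `η_g((τ+1)/2) η_{-g}(τ) = -η_{-g}(τ/2) η_g(τ)`, so `t_g((τ+1)/2) = -η_{-g}(τ/2)/η_{-g}(τ)`,
while `t_g(τ/2) = η_g(τ/2)/η_g(τ)`. Every `Λ` involved is a combination of `E₂` at `τ/2`,
`(τ+1)/2`, `τ`, `2τ` (by periodicity of `E₂`), and the identity becomes a linear consequence of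
the eta-product identity, which eliminates `C η_{-g}(τ)`. -/

section InfiniteProducts

variable {ι : Type*} {c : ℂ} {w : ι → ℂ}

theorem summable_norm_mul_of_norm_le_one (hc : ‖c‖ ≤ 1) (hw : Summable (‖w ·‖)) :
    Summable fun i ↦ ‖c * w i‖ :=
  hw.of_nonneg_of_le (fun _ ↦ norm_nonneg _) fun i ↦ by
    simpa [norm_mul] using mul_le_of_le_one_left (norm_nonneg (w i)) hc

theorem multipliable_one_sub_mul (hc : ‖c‖ ≤ 1) (hw : Summable (‖w ·‖)) :
    Multipliable fun i ↦ 1 - c * w i := by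
  simpa [sub_eq_add_neg] using
    multipliable_one_add_of_summable (f := fun i ↦ -(c * w i))
      (by simpa using summable_norm_mul_of_norm_le_one hc hw)

theorem tprod_one_sub_mul_ne_zero (hc : ‖c‖ ≤ 1) (hw : Summable (‖w ·‖))
    (hw1 : ∀ i, ‖w i‖ < 1) : ∏' i, (1 - c * w i) ≠ 0 := by
  have hfactor : ∀ i, 1 + -(c * w i) ≠ 0 := fun i h ↦ by
    have hlt : ‖c * w i‖ < 1 := by
      rw [norm_mul]; exact mul_lt_one_of_nonneg_of_lt_one_right hc (norm_nonneg _) (hw1 i)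
    have heq : c * w i = 1 := by linear_combination -h
    simp [heq] at hlt
  simpa [sub_eq_add_neg] using
    tprod_one_add_ne_zero_of_summable hfactor
      (by simpa using summable_norm_mul_of_norm_le_one hc hw)

end InfiniteProducts

theorem summable_norm_pow_succ {x : ℂ} (hx : ‖x‖ < 1) : Summable fun n ↦ ‖x ^ (n + 1)‖ := by
  simpa [norm_pow] using
    (summable_nat_add_iff 1).2 (summable_geometric_of_lt_one (norm_nonneg x) hx)

theorem norm_pow_succ_lt_one {x : ℂ} (hx : ‖x‖ < 1) (n : ℕ) : ‖x ^ (n + 1)‖ < 1 := by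
  rw [norm_pow]; exact pow_lt_one₀ (norm_nonneg x) hx n.succ_ne_zero

theorem tprod_neg_pow_mul_tprod_neg_sq_pow {f : ℂ → ℂ}
    (hf : ∀ w : ℕ → ℂ, Summable (‖w ·‖) → Multipliable fun n ↦ f (w n)) {p : ℂ} (hp : ‖p‖ < 1) :
    (∏' n, f ((-p) ^ (n + 1))) * ∏' n, f (-(p ^ 2) ^ (n + 1)) =
      (∏' n, f ((p ^ 2) ^ (n + 1))) * ∏' n, f (-p ^ (n + 1)) := by
  have hsum : ∀ m : ℕ → ℕ, m.Injective → Summable fun k ↦ ‖p ^ m k‖ := fun m hm ↦ by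
    simpa [Function.comp_def] using
      (summable_geometric_of_lt_one (norm_nonneg p) hp).comp_injective hm
  have hodd : (fun k ↦ f ((-p) ^ (2 * k + 1))) = fun k ↦ f (-p ^ (2 * k + 1)) :=
    funext fun k ↦ by rw [Odd.neg_pow ⟨k, rfl⟩]
  have heven : (fun k ↦ f ((-p) ^ (2 * k + 1 + 1))) = fun k ↦ f ((p ^ 2) ^ (k + 1)) :=
    funext fun k ↦ by rw [Even.neg_pow ⟨k + 1, by ring⟩, ← pow_mul]; ring_nf
  have heven' : (fun k ↦ f (-p ^ (2 * k + 1 + 1))) = fun k ↦ f (-(p ^ 2) ^ (k + 1)) :=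
    funext fun k ↦ by rw [← pow_mul]; ring_nf
  have hO : Multipliable fun k ↦ f (-p ^ (2 * k + 1)) :=
    hf _ (by simpa using hsum (2 * · + 1) fun a b h ↦ by simpa using h)
  have hE : Multipliable fun k ↦ f ((p ^ 2) ^ (k + 1)) :=
    hf _ (by simpa [← pow_mul] using hsum (fun k ↦ 2 * (k + 1)) fun a b h ↦ by simpa using h)
  have hE' : Multipliable fun k ↦ f (-(p ^ 2) ^ (k + 1)) :=
    hf _ (by simpa [← pow_mul] using hsum (fun k ↦ 2 * (k + 1)) fun a b h ↦ by simpa using h)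
  rw [← tprod_even_mul_odd (f := fun n ↦ f ((-p) ^ (n + 1))) (hodd ▸ hO) (heven ▸ hE),
    ← tprod_even_mul_odd (f := fun n ↦ f (-p ^ (n + 1))) hO (heven' ▸ hE'), hodd, heven, heven']
  ring

theorem norm_qq_lt_one {τ : ℂ} (hτ : 0 < τ.im) : ‖qq τ‖ < 1 := by
  rw [qq, twoPiI, Complex.norm_exp, Real.exp_lt_one_iff]
  simp only [Complex.mul_re, Complex.mul_im, Complex.I_re, Complex.I_im, Complex.ofReal_re,
    Complex.ofReal_im, Complex.re_ofNat, Complex.im_ofNat]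
  nlinarith [Real.pi_pos]

theorem qq_add_one (τ : ℂ) : qq (τ + 1) = qq τ := by
  rw [qq, qq, twoPiI, mul_add, Complex.exp_add, mul_one, Complex.exp_two_pi_mul_I, mul_one]

theorem qq_eq_qq_div_two_sq (τ : ℂ) : qq τ = qq (τ / 2) ^ 2 := by
  rw [qq, qq, ← Complex.exp_nat_mul]
  ring_nf

theorem qq_add_one_div_two (τ : ℂ) : qq ((τ + 1) / 2) = -qq (τ / 2) := by
  rw [qq, qq, show twoPiI * ((τ + 1) / 2) = twoPiI * (τ / 2) + Real.pi * Complex.I by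
    rw [twoPiI]; ring, Complex.exp_add, Complex.exp_pi_mul_I, mul_neg_one]

section EtaProducts

variable {lam : Fin 10 → ℂ}

def etaGFactor (lam : Fin 10 → ℂ) (w : ℂ) : ℂ :=
  (1 - w) ^ 4 * ∏ i, ((1 - (lam i)⁻¹ * w) * (1 - lam i * w))

theorem etaG_eq_tprod (lam : Fin 10 → ℂ) (τ : ℂ) :
    etaG lam τ = qq τ * ∏' n, etaGFactor lam (qq τ ^ (n + 1)) := rfl

theorem etaGneg_eq_tprod (lam : Fin 10 → ℂ) (τ : ℂ) :
    etaGneg lam τ = qq τ * ∏' n, etaGFactor lam (-qq τ ^ (n + 1)) := by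
  simp only [etaGneg, etaGFactor, sub_neg_eq_add, mul_neg]

theorem hasProd_etaGFactor (hlam : ∀ i, ‖lam i‖ = 1) {w : ℕ → ℂ} (hw : Summable (‖w ·‖)) :
    HasProd (fun n ↦ etaGFactor lam (w n))
      ((∏' n, (1 - w n)) ^ 4 *
        ∏ i, ((∏' n, (1 - (lam i)⁻¹ * w n)) * ∏' n, (1 - lam i * w n))) := by
  have hinv : ∀ i, ‖(lam i)⁻¹‖ ≤ 1 := fun i ↦ by simp [hlam i]
  simpa [etaGFactor] using ((multipliable_one_sub_mul norm_one.le hw).hasProd.pow 4).mul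
    (hasProd_prod fun i _ ↦ (multipliable_one_sub_mul (hinv i) hw).hasProd.mul
      (multipliable_one_sub_mul (hlam i).le hw).hasProd)

theorem tprod_etaGFactor_ne_zero (hlam : ∀ i, ‖lam i‖ = 1) {w : ℕ → ℂ}
    (hw : Summable (‖w ·‖)) (hw1 : ∀ n, ‖w n‖ < 1) : ∏' n, etaGFactor lam (w n) ≠ 0 := by
  have hinv : ∀ i, ‖(lam i)⁻¹‖ ≤ 1 := fun i ↦ by simp [hlam i]
  rw [(hasProd_etaGFactor hlam hw).tprod_eq]
  exact mul_ne_zero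
    (pow_ne_zero _ (by simpa using tprod_one_sub_mul_ne_zero norm_one.le hw hw1))
    (Finset.prod_ne_zero_iff.2 fun i _ ↦ mul_ne_zero (tprod_one_sub_mul_ne_zero (hinv i) hw hw1)
      (tprod_one_sub_mul_ne_zero (hlam i).le hw hw1))

theorem etaG_add_one (lam : Fin 10 → ℂ) (τ : ℂ) : etaG lam (τ + 1) = etaG lam τ := by
  simp only [etaG, qq_add_one]

theorem etaG_ne_zero (hlam : ∀ i, ‖lam i‖ = 1) {τ : ℂ} (hτ : 0 < τ.im) : etaG lam τ ≠ 0 := by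
  have hq := norm_qq_lt_one hτ
  rw [etaG_eq_tprod]
  exact mul_ne_zero (Complex.exp_ne_zero _) (tprod_etaGFactor_ne_zero hlam
    (summable_norm_pow_succ hq) (norm_pow_succ_lt_one hq))

theorem etaGneg_ne_zero (hlam : ∀ i, ‖lam i‖ = 1) {τ : ℂ} (hτ : 0 < τ.im) :
    etaGneg lam τ ≠ 0 := by
  have hq := norm_qq_lt_one hτ
  rw [etaGneg_eq_tprod]
  exact mul_ne_zero (Complex.exp_ne_zero _) (tprod_etaGFactor_ne_zero hlam
    (by simpa using summable_norm_pow_succ hq) (by simpa using norm_pow_succ_lt_one hq))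

theorem etaG_add_one_div_two_mul_etaGneg (hlam : ∀ i, ‖lam i‖ = 1) {τ : ℂ} (hτ : 0 < τ.im) :
    etaG lam ((τ + 1) / 2) * etaGneg lam τ = -(etaGneg lam (τ / 2) * etaG lam τ) := by
  have hp : ‖qq (τ / 2)‖ < 1 := norm_qq_lt_one (by simpa using hτ)
  rw [etaG_eq_tprod, etaGneg_eq_tprod, etaGneg_eq_tprod, etaG_eq_tprod, qq_add_one_div_two,
    qq_eq_qq_div_two_sq τ]
  linear_combination -qq (τ / 2) ^ 3 * tprod_neg_pow_mul_tprod_neg_sq_pow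
    (fun _ hw ↦ (hasProd_etaGFactor hlam hw).multipliable) hp

theorem tg_div_two (lam : Fin 10 → ℂ) (τ : ℂ) :
    tg lam (τ / 2) = etaG lam (τ / 2) / etaG lam τ := by
  rw [tg, mul_div_cancel₀ τ two_ne_zero]

theorem tg_add_one_div_two (hlam : ∀ i, ‖lam i‖ = 1) {τ : ℂ} (hτ : 0 < τ.im) :
    tg lam ((τ + 1) / 2) = -(etaGneg lam (τ / 2) / etaGneg lam τ) := by
  rw [tg, mul_div_cancel₀ _ two_ne_zero, etaG_add_one]
  field_simp [etaG_ne_zero hlam hτ, etaGneg_ne_zero hlam hτ]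
  linear_combination etaG_add_one_div_two_mul_etaGneg hlam hτ

end EtaProducts

theorem E2_add_one (τ : ℂ) : E2 (τ + 1) = E2 τ := by
  simp only [E2, qq_add_one]

theorem Lam_two (τ : ℂ) : Lam 2 τ = (2 * E2 (2 * τ) - E2 τ) / 12 := by
  rw [Lam]; push_cast; ring

theorem Lam_two_div_two (τ : ℂ) : Lam 2 (τ / 2) = (2 * E2 τ - E2 (τ / 2)) / 12 := by
  rw [Lam]; push_cast; rw [mul_div_cancel₀ τ two_ne_zero]; ring

theorem Lam_two_div_two_add_half (τ : ℂ) :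
    Lam 2 (τ / 2 + 1 / 2) = (2 * E2 τ - E2 ((τ + 1) / 2)) / 12 := by
  rw [Lam, show ((2 : ℕ) : ℂ) * (τ / 2 + 1 / 2) = τ + 1 by push_cast; ring, E2_add_one, add_div]
  push_cast; ring

theorem Lam_four_div_two (τ : ℂ) : Lam 4 (τ / 2) = (4 * E2 (2 * τ) - E2 (τ / 2)) / 6 := by
  rw [Lam, show ((4 : ℕ) : ℂ) * (τ / 2) = 2 * τ by push_cast; ring]
  push_cast; ring

theorem Lam_four_add_one_div_two (τ : ℂ) :
    Lam 4 ((τ + 1) / 2) = (4 * E2 (2 * τ) - E2 ((τ + 1) / 2)) / 6 := by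
  rw [Lam, show ((4 : ℕ) : ℂ) * ((τ + 1) / 2) = 2 * τ + 1 + 1 by push_cast; ring,
    E2_add_one, E2_add_one]
  push_cast; ring

/-- Assuming the eta-product identity,
`F(τ) − (1/2)·D·η_g(τ) − 2χ·Λ₂(τ) = (1/4)·[t_g(τ/2)·Λ₄(τ/2) + t_g((τ+1)/2)·Λ₄((τ+1)/2)]`. -/
theorem Fg_Hecke_expression (lam : Fin 10 → ℂ)
    (hlam : ∀ i, ‖lam i‖ = 1) (chi C D : ℂ)
    (hid : ∀ τ : ℂ, 0 < τ.im →
      2 * chi + etaG lam (τ / 2) / etaG lam τ - etaGneg lam (τ / 2) / etaGneg lam τ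
        + C * etaGneg lam τ = 0) :
    ∀ τ : ℂ, 0 < τ.im →
      Fg lam C D τ - 1 / 2 * D * etaG lam τ - 2 * chi * Lam 2 τ
        = 1 / 4 * (tg lam (τ / 2) * Lam 4 (τ / 2)
            + tg lam ((τ + 1) / 2) * Lam 4 ((τ + 1) / 2)) := by
  intro τ hτ
  rw [Fg, tg_div_two, tg_add_one_div_two hlam hτ, Lam_two_div_two_add_half, Lam_two_div_two,
    Lam_two, Lam_four_div_two, Lam_four_add_one_div_two]
  linear_combination (E2 τ - 2 * E2 (2 * τ)) / 12 * hid τ hτ
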